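/- arXiv:2402.14103 — 5 statements merged into one kernel-verified Lean document; each statement's English description precedes it below -/
import Mathlib

section
/- Let D be a finite domain and let A : D × D → Bool be a (deterministic) function. Let x, x₁, ..., x_M be i.i.d. random variables drawn from a distribution Q on D. Define the event E(x; x₁,...,x_M) that for every i ∈ [M], A(x, xᵢ) = 0 and A(xᵢ, x) = 1. Then the probability of E(x; x₁,...,x_M) is at most 1/(M+1). -/
/-!
Let `E j` be the event that draw `j` is beaten by every other draw: `A (x j) (x i) = false` and
`A (x i) (x j) = true` for all `i ≠ j`. The events `E 0, …, E M` are pairwise disjoint, since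
`E j ∩ E k` would force `A (x j) (x k)` to be both `false` and `true`, and they all have the same
probability, because swapping coordinates `0` and `j` preserves the i.i.d. product measure and
maps `E 0` onto `E j`. Hence `(M + 1) · P(E 0) ≤ 1`.
-/

open MeasureTheory

theorem MeasureTheory.Measure.pi_preimage_comp_perm {ι α : Type*} [Fintype ι] [MeasurableSpace α]
    (Q : Measure α) [SigmaFinite Q] (σ : Equiv.Perm ι) (s : Set (ι → α)) :
    Measure.pi (fun _ : ι => Q) ((· ∘ σ) ⁻¹' s) = Measure.pi (fun _ : ι => Q) s := by
  convert (measurePreserving_piCongrLeft (fun _ : ι => Q) σ.symm).measure_preimage_equiv s using 2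
  ext f
  rw [Set.mem_preimage, Set.mem_preimage, MeasurableEquiv.coe_piCongrLeft]
  congr!
  ext i
  simp [Equiv.piCongrLeft_apply_eq_cast]

theorem measure_le_inv_card_of_pairwise_disjoint {α ι : Type*} [Fintype ι] [MeasurableSpace α]
    {μ : Measure α} [IsProbabilityMeasure μ] {s : ι → Set α}
    (hs : ∀ i, NullMeasurableSet (s i) μ) (hd : Pairwise (Function.onFun Disjoint s))
    {j : ι} (heq : ∀ i, μ (s i) = μ (s j)) :
    μ (s j) ≤ (Fintype.card ι : ENNReal)⁻¹ := by
  have hsum : ∑ i, μ (s i) ≤ 1 :=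
    (sum_measure_le_measure_univ (fun i _ => hs i) fun i _ k _ hik => (hd hik).aedisjoint).trans
      prob_le_one
  simp only [heq, Finset.sum_const, Finset.card_univ, nsmul_eq_mul] at hsum
  rwa [ENNReal.le_inv_iff_mul_le, mul_comm]

section BeatenByAll

variable {ι D : Type*} (A : D → D → Bool)

def beatenByAll (j : ι) : Set (ι → D) :=
  {f | ∀ i, i ≠ j → A (f j) (f i) = false ∧ A (f i) (f j) = true}

theorem pairwise_disjoint_beatenByAll :
    Pairwise (Function.onFun Disjoint (beatenByAll (ι := ι) A)) := by
  intro j k hjk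
  refine Set.disjoint_left.mpr fun f hj hk => ?_
  exact Bool.false_ne_true ((hj k hjk.symm).1.symm.trans (hk j hjk).2)

theorem preimage_comp_beatenByAll (σ : Equiv.Perm ι) (j : ι) :
    (· ∘ σ) ⁻¹' beatenByAll A j = beatenByAll A (σ j) := by
  ext f
  simp only [beatenByAll, Set.mem_preimage, Set.mem_ofPred_eq, Function.comp_apply]
  refine ⟨fun h i hi => ?_, fun h i hi => h (σ i) (σ.injective.ne hi)⟩
  simpa using h (σ.symm i) (by simpa [Equiv.symm_apply_eq] using hi)

theorem beatenByAll_zero_eq {M : ℕ} :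
    beatenByAll A (0 : Fin (M + 1)) =
      {f | ∀ i : Fin M, A (f 0) (f i.succ) = false ∧ A (f i.succ) (f 0) = true} := by
  ext f
  refine ⟨fun h i => h i.succ i.succ_ne_zero, fun h i hi => ?_⟩
  obtain ⟨k, rfl⟩ := Fin.exists_succ_eq.mpr hi
  exact h k

end BeatenByAll

/-- For i.i.d. draws x, x₁, ..., x_M from a distribution Q on a finite domain D,
the event that A(x, xᵢ) = 0 and A(xᵢ, x) = 1 for every i has probability at most 1/(M+1). -/
theorem stmt0 {D : Type*} [Fintype D] [MeasurableSpace D] [MeasurableSingletonClass D]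
    (A : D → D → Bool) (Q : Measure D) [IsProbabilityMeasure Q] (M : ℕ) :
    (Measure.pi (fun _ : Fin (M + 1) => Q))
      {f | ∀ i : Fin M, A (f 0) (f i.succ) = false ∧ A (f i.succ) (f 0) = true}
      ≤ 1 / (M + 1) := by
  rw [← beatenByAll_zero_eq, one_div]
  have h := measure_le_inv_card_of_pairwise_disjoint
    (fun j => (Set.toFinite (beatenByAll A j)).measurableSet.nullMeasurableSet)
    (pairwise_disjoint_beatenByAll A) (j := (0 : Fin (M + 1))) fun j => by
      rw [← Equiv.swap_apply_left 0 j, ← preimage_comp_beatenByAll, Measure.pi_preimage_comp_perm Q]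
  rwa [Fintype.card_fin, Nat.cast_succ] at h
end

section
/- Let a₁, ..., a_k be {0,1}-valued random variables such that for every subset S ⊆ [k], E[∏_{i∈S} a_i] ≤ p^{|S|} for some p ∈ [0,1]. Let b₁, ..., b_k be i.i.d. Bernoulli(p) random variables. Then for every positive integer ℓ, E[(a₁ + ... + a_k)^ℓ] ≤ E[(b₁ + ... + b_k)^ℓ]. -/
open MeasureTheory ProbabilityTheory

/-! Since each `aᵢ` is idempotent, `(∑ aᵢ)^ℓ = ∑_{f : [ℓ] → [k]} ∏_{i ∈ im f} aᵢ`, and likewise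
for the `bᵢ` almost surely. Taking expectations, each term for the `aᵢ` is at most `p^|im f|`,
which by independence is exactly the corresponding term for the `bᵢ`. -/

theorem Fintype.sum_pow_eq_sum_prod_image {ι R : Type*} [Fintype ι] [DecidableEq ι]
    [CommSemiring R] {x : ι → R} (hx : ∀ i, IsIdempotentElem (x i)) (n : ℕ) :
    (∑ i, x i) ^ n = ∑ f : Fin n → ι, ∏ i ∈ Finset.univ.image f, x i := by
  rw [Fintype.sum_pow]
  refine Finset.sum_congr rfl fun f _ => ?_
  rw [Finset.prod_comp]
  refine Finset.prod_congr rfl fun i hi => ?_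
  obtain ⟨j, -, rfl⟩ := Finset.mem_image.mp hi
  exact (hx _).pow_eq <| Finset.card_ne_zero.mpr ⟨j, by simp⟩

section ZeroOne

variable {Ω ι : Type*} [MeasurableSpace Ω] {μ : Measure Ω} {f : ι → Ω → ℝ}

theorem integrable_prod_of_ae_zero_or_one [IsFiniteMeasure μ]
    (hf : ∀ i, AEStronglyMeasurable (f i) μ) (h01 : ∀ᵐ ω ∂μ, ∀ i, f i ω = 0 ∨ f i ω = 1)
    (s : Finset ι) : Integrable (fun ω => ∏ i ∈ s, f i ω) μ := by
  refine .of_bound (Finset.aestronglyMeasurable_fun_prod s fun i _ => hf i) 1 ?_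
  filter_upwards [h01] with ω hω
  rw [norm_prod]
  exact Finset.prod_le_one (fun _ _ => norm_nonneg _) fun i _ => by
    rcases hω i with h | h <;> simp [h]

theorem integral_sum_pow_eq_sum_integral_prod [IsFiniteMeasure μ] [Fintype ι] [DecidableEq ι]
    (hf : ∀ i, AEStronglyMeasurable (f i) μ) (h01 : ∀ᵐ ω ∂μ, ∀ i, f i ω = 0 ∨ f i ω = 1)
    (n : ℕ) :
    ∫ ω, (∑ i, f i ω) ^ n ∂μ
      = ∑ g : Fin n → ι, ∫ ω, ∏ i ∈ Finset.univ.image g, f i ω ∂μ := by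
  rw [← integral_finsetSum _ fun g _ => integrable_prod_of_ae_zero_or_one hf h01 _]
  refine integral_congr_ae ?_
  filter_upwards [h01] with ω hω
  exact Fintype.sum_pow_eq_sum_prod_image
    (fun i => IsIdempotentElem.iff_eq_zero_or_one.mpr (hω i)) n

end ZeroOne

section TwoPointLaw

variable {Ω : Type*} [MeasurableSpace Ω] {μ : Measure Ω} {X : Ω → ℝ} {c d : ENNReal}

theorem ae_eq_zero_or_one_of_map_eq (hX : AEMeasurable X μ)
    (hlaw : μ.map X = c • Measure.dirac 0 + d • Measure.dirac 1) :
    ∀ᵐ ω ∂μ, X ω = 0 ∨ X ω = 1 := by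
  refine ae_of_ae_map (p := fun x => x = 0 ∨ x = 1) hX ?_
  rw [hlaw, ae_add_measure_iff]
  constructor <;> refine Measure.ae_smul_measure ?_ _ <;> simp [ae_dirac_eq]

theorem integral_eq_toReal_of_map_eq (hX : AEMeasurable X μ) (hc : c ≠ ⊤) (hd : d ≠ ⊤)
    (hlaw : μ.map X = c • Measure.dirac 0 + d • Measure.dirac 1) :
    ∫ ω, X ω ∂μ = d.toReal := by
  have hid : ∀ a : ℝ, Integrable (fun x => x) (Measure.dirac a) := fun a =>
    integrable_dirac (by simp)
  rw [← integral_map (f := fun x => x) hX aestronglyMeasurable_id, hlaw,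
    integral_add_measure ((hid 0).smul_measure hc) ((hid 1).smul_measure hd),
    integral_smul_measure, integral_smul_measure, integral_dirac, integral_dirac]
  simp

end TwoPointLaw

theorem ProbabilityTheory.iIndepFun.integral_prod_eq_pow {Ω ι : Type*} [MeasurableSpace Ω]
    {μ : Measure Ω} {b : ι → Ω → ℝ} {p : ℝ} (hb : iIndepFun b μ)
    (hmeas : ∀ i, AEStronglyMeasurable (b i) μ) (hmean : ∀ i, ∫ ω, b i ω ∂μ = p)
    (s : Finset ι) : ∫ ω, ∏ i ∈ s, b i ω ∂μ = p ^ s.card := by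
  simp_rw [← Finset.prod_coe_sort s]
  rw [(hb.precomp Subtype.val_injective).integral_fun_prod_eq_prod_integral fun i => hmeas i]
  simp [hmean]

theorem stmt9_general {Ω Ω' : Type*} [MeasureSpace Ω] [MeasureSpace Ω']
    [IsProbabilityMeasure (ℙ : Measure Ω)] [IsProbabilityMeasure (ℙ : Measure Ω')]
    (k : ℕ) (p : ℝ) (hp0 : 0 ≤ p)
    (a : Fin k → Ω → ℝ) (hameas : ∀ i, Measurable (a i))
    (ha01 : ∀ i ω, a i ω = 0 ∨ a i ω = 1)
    (hmom : ∀ S : Finset (Fin k), ∫ ω, ∏ i ∈ S, a i ω ∂ℙ ≤ p ^ S.card)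
    (b : Fin k → Ω' → ℝ) (hbmeas : ∀ i, Measurable (b i))
    (hbindep : iIndepFun b ℙ)
    (hblaw : ∀ i, Measure.map (b i) ℙ
      = ENNReal.ofReal (1 - p) • Measure.dirac (0 : ℝ)
        + ENNReal.ofReal p • Measure.dirac (1 : ℝ))
    (ℓ : ℕ) :
    ∫ ω, (∑ i, a i ω) ^ ℓ ∂ℙ ≤ ∫ ω, (∑ i, b i ω) ^ ℓ ∂ℙ := by
  have hb01 : ∀ᵐ ω ∂ℙ, ∀ i, b i ω = 0 ∨ b i ω = 1 :=
    ae_all_iff.mpr fun i => ae_eq_zero_or_one_of_map_eq (hbmeas i).aemeasurable (hblaw i)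
  have hbmean : ∀ i, ∫ ω, b i ω ∂ℙ = p := fun i => by
    rw [integral_eq_toReal_of_map_eq (hbmeas i).aemeasurable ENNReal.ofReal_ne_top
      ENNReal.ofReal_ne_top (hblaw i), ENNReal.toReal_ofReal hp0]
  rw [integral_sum_pow_eq_sum_integral_prod (fun i => (hameas i).aestronglyMeasurable)
      (.of_forall fun ω i => ha01 i ω),
    integral_sum_pow_eq_sum_integral_prod (fun i => (hbmeas i).aestronglyMeasurable) hb01]
  gcongr with g
  rw [hbindep.integral_prod_eq_pow (fun i => (hbmeas i).aestronglyMeasurable) hbmean]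
  exact hmom _

/-- Moment domination: if {0,1}-valued variables a₁,...,a_k satisfy
E[∏_{i∈S} aᵢ] ≤ p^{|S|} for every S ⊆ [k], and b₁,...,b_k are i.i.d.
Bernoulli(p), then E[(∑ aᵢ)^ℓ] ≤ E[(∑ bᵢ)^ℓ]. -/
theorem stmt9 {Ω Ω' : Type*} [MeasureSpace Ω] [MeasureSpace Ω']
    [IsProbabilityMeasure (ℙ : Measure Ω)] [IsProbabilityMeasure (ℙ : Measure Ω')]
    (k : ℕ) (p : ℝ) (hp0 : 0 ≤ p) (hp1 : p ≤ 1)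
    (a : Fin k → Ω → ℝ) (hameas : ∀ i, Measurable (a i))
    (ha01 : ∀ i ω, a i ω = 0 ∨ a i ω = 1)
    (hmom : ∀ S : Finset (Fin k), ∫ ω, ∏ i ∈ S, a i ω ∂ℙ ≤ p ^ S.card)
    (b : Fin k → Ω' → ℝ) (hbmeas : ∀ i, Measurable (b i))
    (hbindep : iIndepFun b ℙ)
    (hblaw : ∀ i, Measure.map (b i) ℙ
      = ENNReal.ofReal (1 - p) • Measure.dirac (0 : ℝ)
        + ENNReal.ofReal p • Measure.dirac (1 : ℝ))
    (ℓ : ℕ) (hℓ : 0 < ℓ) :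
    ∫ ω, (∑ i, a i ω) ^ ℓ ∂ℙ ≤ ∫ ω, (∑ i, b i ω) ^ ℓ ∂ℙ :=
  stmt9_general k p hp0 a hameas ha01 hmom b hbmeas hbindep hblaw ℓ
end

section
/- Let B ∼ Binomial(k, p). Then for every positive integer ℓ, E[B^ℓ] ≤ (kp + ℓ/2)^ℓ. -/
/-!
Let `M_k(ℓ)` be the `ℓ`-th moment of `Binomial(k, q)`. The absorption identity
`i * C(k+1, i) = (k+1) * C(k, i-1)` gives
`M_{k+1}(n+1) = (k+1) q E[(B_k + 1)^n] = (k+1) q ∑_t C(n, t) M_k(t)`.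
By strong induction on the order, `M_k(t) ≤ (kq + t/2)^t ≤ (a + n/2)^t` for `t ≤ n`,
where `a = (k+1) q`, so `M_{k+1}(n+1) ≤ a (a + n/2 + 1)^n`, and Bernoulli's inequality
bounds this by `(a + (n+1)/2)^(n+1)`.
-/

open Finset

noncomputable def binomialExpect (q : ℝ) (k : ℕ) (f : ℕ → ℝ) : ℝ :=
  ∑ i ∈ range (k + 1), k.choose i * q ^ i * (1 - q) ^ (k - i) * f i

lemma binomialExpect_one (q : ℝ) (k : ℕ) : binomialExpect q k (fun _ ↦ 1) = 1 := by
  calc binomialExpect q k (fun _ ↦ 1) = (q + (1 - q)) ^ k := by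
        rw [binomialExpect, add_pow]
        exact sum_congr rfl fun i _ ↦ by ring
    _ = 1 := by simp

lemma binomialExpect_zero_left (q : ℝ) (f : ℕ → ℝ) : binomialExpect q 0 f = f 0 := by
  simp [binomialExpect]

lemma binomialExpect_succ_mul_self (q : ℝ) (k : ℕ) (f : ℕ → ℝ) :
    binomialExpect q (k + 1) (fun i ↦ i * f i)
      = (k + 1) * q * binomialExpect q k (fun i ↦ f (i + 1)) := by
  rw [binomialExpect, sum_range_succ', binomialExpect, mul_sum]
  simp only [Nat.cast_zero, zero_mul, mul_zero, add_zero]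
  refine sum_congr rfl fun i _ ↦ ?_
  have hchoose : ((k + 1).choose (i + 1) * (i + 1) : ℝ) = (k + 1) * k.choose i := by
    exact_mod_cast (Nat.add_one_mul_choose_eq k i).symm
  rw [Nat.add_sub_add_right]
  push_cast
  linear_combination (q ^ (i + 1) * (1 - q) ^ (k - i) * f (i + 1)) * hchoose

lemma binomialExpect_add_one_pow (q : ℝ) (k n : ℕ) :
    binomialExpect q k (fun i ↦ ((i : ℝ) + 1) ^ n)
      = ∑ t ∈ range (n + 1), n.choose t * binomialExpect q k (fun i ↦ (i : ℝ) ^ t) := by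
  simp only [binomialExpect, add_pow, one_pow, mul_one, mul_sum]
  rw [sum_comm]
  exact sum_congr rfl fun t _ ↦ sum_congr rfl fun i _ ↦ by ring

lemma binomialExpect_pow_succ_succ (q : ℝ) (k n : ℕ) :
    binomialExpect q (k + 1) (fun i ↦ (i : ℝ) ^ (n + 1))
      = (k + 1) * q *
        ∑ t ∈ range (n + 1), n.choose t * binomialExpect q k (fun i ↦ (i : ℝ) ^ t) := by
  simp only [pow_succ', ← binomialExpect_add_one_pow]
  exact_mod_cast binomialExpect_succ_mul_self q k (fun i ↦ (i : ℝ) ^ n)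

lemma mul_add_half_pow_le_pow_succ {x : ℝ} (hx : 0 ≤ x) (n : ℕ) :
    x * (x + n / 2 + 1) ^ n ≤ (x + (n + 1) / 2) ^ (n + 1) := by
  set b := x + n / 2 + 1 with hb_def
  have hb : 1 ≤ b := le_add_of_nonneg_left (by positivity)
  -- Bernoulli's inequality for `(1 - 1/(2b)) ^ (n + 1)`, multiplied by `b ^ (n + 1)`
  have bernoulli :=
    pow_add_mul_le_add_pow (a := b) (b := -(1 / 2)) (by linarith) (by linarith) (n + 1)
  calc x * b ^ n ≤ (b - (n + 1) / 2) * b ^ n := by gcongr; linarith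
    _ = b ^ (n + 1) + (n + 1 : ℕ) * b ^ (n + 1 - 1) * -(1 / 2) := by push_cast; ring
    _ ≤ (b + -(1 / 2)) ^ (n + 1) := bernoulli
    _ = (x + (n + 1) / 2) ^ (n + 1) := by rw [hb_def]; ring

theorem binomialExpect_pow_le {q : ℝ} (hq : 0 ≤ q) (k ℓ : ℕ) :
    binomialExpect q k (fun i ↦ (i : ℝ) ^ ℓ) ≤ (k * q + ℓ / 2) ^ ℓ := by
  induction ℓ using Nat.strong_induction_on generalizing k with
  | _ ℓ ih =>
  rcases ℓ with _ | n
  · simp [binomialExpect_one]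
  rcases k with _ | k
  · simp only [binomialExpect_zero_left, Nat.cast_zero, zero_pow n.succ_ne_zero]
    positivity
  set x : ℝ := (k + 1) * q
  have hx : 0 ≤ x := by positivity
  have moments_le (t : ℕ) (ht : t ∈ range (n + 1)) :
      binomialExpect q k (fun i ↦ (i : ℝ) ^ t) ≤ (x + n / 2) ^ t := by
    have htn : (t : ℝ) ≤ n := by exact_mod_cast Nat.lt_succ_iff.mp (mem_range.mp ht)
    refine (ih t (mem_range.mp ht) k).trans ?_
    gcongr
    linarith
  calc binomialExpect q (k + 1) (fun i ↦ (i : ℝ) ^ (n + 1))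
      = x * ∑ t ∈ range (n + 1), n.choose t * binomialExpect q k (fun i ↦ (i : ℝ) ^ t) :=
        binomialExpect_pow_succ_succ q k n
    _ ≤ x * ∑ t ∈ range (n + 1), n.choose t * (x + n / 2) ^ t := by
        gcongr with t ht
        exact moments_le t ht
    _ = x * (x + n / 2 + 1) ^ n := by
        rw [add_pow]
        exact congrArg (x * ·) (sum_congr rfl fun t _ ↦ by ring)
    _ ≤ (x + (n + 1) / 2) ^ (n + 1) := mul_add_half_pow_le_pow_succ hx n
    _ = (((k + 1 : ℕ) : ℝ) * q + ((n + 1 : ℕ) : ℝ) / 2) ^ (n + 1) := by push_cast; ring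

lemma PMF.sum_binomial_toReal_mul (p : NNReal) (hp : p ≤ 1) (k : ℕ) (f : ℕ → ℝ) :
    ∑ i : Fin (k + 1), (PMF.binomial p hp k i).toReal * f i = binomialExpect p k f := by
  rw [binomialExpect,
    ← Fin.sum_univ_eq_sum_range (fun i ↦ k.choose i * (p : ℝ) ^ i * (1 - p) ^ (k - i) * f i)]
  refine sum_congr rfl fun i _ ↦ congrArg (· * f i) ?_
  simp [PMF.binomial, ENNReal.toReal_sub_of_le, hp]
  ring

/-- Moment bound for the binomial distribution (Ahle 2022, Corollary 1):
if B ∼ Binomial(k, p) then E[B^ℓ] ≤ (kp + ℓ/2)^ℓ. -/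
theorem stmt10 (k : ℕ) (p : ENNReal) (hp : p ≤ 1) (ℓ : ℕ) :
    ∑ i : Fin (k + 1), (PMF.binomial p.toNNReal (by simpa using ENNReal.toNNReal_mono ENNReal.one_ne_top hp) k i).toReal * (i : ℕ) ^ ℓ
      ≤ ((k : ℝ) * p.toReal + ℓ / 2) ^ ℓ :=
  (PMF.sum_binomial_toReal_mul _ _ k (fun i ↦ (i : ℝ) ^ ℓ)).trans_le
    (binomialExpect_pow_le ENNReal.toReal_nonneg k ℓ)
end

section
/- Let x⁽¹⁾ and x⁽²⁾ be independent random vectors in ℝ^d, each sampled uniformly from the set of k-sparse vectors with nonzero entries in {±1/√(k+1)} (i.e., uniformly random support of size k, i.i.d. random signs, entries of magnitude 1/√(k+1)). Then there exists an absolute constant C > 0 such that for every positive integer ℓ, E[⟨x⁽¹⁾, x⁽²⁾⟩^{2ℓ}] ≤ (Cℓ)^ℓ · (1/d + ℓ/k²)^ℓ. -/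
/-!
Conditionally on the two supports, the inner product is a Rademacher sum `∑ᵢ σᵢ aᵢ` with
`∑ᵢ aᵢ² = |T₁ ∩ T₂| / (k+1)²`. Its moment generating function is at most
`exp (t² ∑ aᵢ² / 2)` (since `cosh x ≤ exp (x²/2)`), and comparing `x^{2ℓ}` with `exp (t|x|)` at
the optimal `t` turns this into `E[⟨x⁽¹⁾, x⁽²⁾⟩^{2ℓ}] ≲ (Cℓ)^ℓ E[|T₁ ∩ T₂|^ℓ] / (k+1)^{2ℓ}`.
Expanding `|T₁ ∩ T₂|^ℓ` as a count of `ℓ`-tuples lying in both supports, a tuple with `r`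
distinct entries lies in a random `k`-set with probability at most `(k/d)^r`, and summing
`((k/d)²)^r` over all tuples gives `E[|T₁ ∩ T₂|^ℓ] ≤ (ℓ + k²/d)^ℓ`.
-/

open Finset Real
open scoped Nat

def boolSign (b : Bool) : ℝ := if b then 1 else -1

lemma boolSign_sq (b : Bool) : boolSign b ^ 2 = 1 := by cases b <;> norm_num [boolSign]

lemma sum_exp_boolSign_mul (a : ℝ) : ∑ b : Bool, exp (boolSign b * a) = 2 * cosh a := by
  simp [boolSign, cosh_eq]
  ring

section Rademacher

variable {ι : Type*} [Fintype ι] [DecidableEq ι]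

theorem sum_exp_sum_boolSign_mul_le (a : ι → ℝ) :
    ∑ σ : ι → Bool, exp (∑ i, boolSign (σ i) * a i)
      ≤ 2 ^ Fintype.card ι * exp ((∑ i, a i ^ 2) / 2) := by
  calc ∑ σ : ι → Bool, exp (∑ i, boolSign (σ i) * a i)
      = ∏ i, 2 * cosh (a i) := by
        simp_rw [exp_sum, ← sum_exp_boolSign_mul]
        exact (Fintype.prod_sum fun i b => exp (boolSign b * a i)).symm
    _ ≤ ∏ i, 2 * exp (a i ^ 2 / 2) :=
        prod_le_prod (fun i _ => by positivity) fun i _ => by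
          gcongr; exact cosh_le_exp_half_sq _
    _ = _ := by rw [prod_mul_distrib, prod_const, card_univ, ← exp_sum, sum_div]

theorem sum_pow_mul_le_of_sum_exp_le {Ω : Type*} [Fintype Ω] (X : Ω → ℝ) {M v : ℝ}
    (hv : 0 < v) (hX : ∀ t, ∑ ω, exp (t * X ω) ≤ M * exp (t ^ 2 * v / 2)) (m : ℕ) :
    (∑ ω, X ω ^ (2 * m)) * (2 * m) ^ m ≤ 2 * M * (2 * m)! * (exp 1 * v) ^ m := by
  set t := √(2 * m / v)
  have ht : t ^ 2 = 2 * m / v := sq_sqrt (by positivity)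
  have hpoint (x : ℝ) : t ^ (2 * m) * x ^ (2 * m) ≤ (2 * m)! * (exp (t * x) + exp (-t * x)) := by
    have hexp : exp (t * |x|) ≤ exp (t * x) + exp (-t * x) := by
      rcases abs_choice x with h | h
      · rw [h]; linarith [exp_pos (-t * x)]
      · rw [h, mul_neg, ← neg_mul]; linarith [exp_pos (t * x)]
    have h := pow_div_factorial_le_exp (t * |x|) (by positivity) (2 * m)
    rw [div_le_iff₀ (by positivity), mul_pow, (even_two_mul m).pow_abs] at h
    exact h.trans (by rw [mul_comm]; gcongr)
  calc (∑ ω, X ω ^ (2 * m)) * (2 * m) ^ m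
      = v ^ m * ∑ ω, t ^ (2 * m) * X ω ^ (2 * m) := by
        rw [← mul_sum, pow_mul, ht, ← mul_assoc, ← mul_pow, mul_div_cancel₀ _ hv.ne', mul_comm]
    _ ≤ v ^ m * ((2 * m)! * (M * exp (t ^ 2 * v / 2) + M * exp ((-t) ^ 2 * v / 2))) := by
        gcongr
        calc ∑ ω, t ^ (2 * m) * X ω ^ (2 * m)
            ≤ ∑ ω, (2 * m)! * (exp (t * X ω) + exp (-t * X ω)) := sum_le_sum fun ω _ => hpoint _
          _ ≤ _ := by rw [← mul_sum, sum_add_distrib]; gcongr <;> apply hX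
    _ = 2 * M * (2 * m)! * (exp 1 * v) ^ m := by
        rw [neg_sq, ht, div_mul_cancel₀ _ hv.ne', mul_div_cancel_left₀ _ two_ne_zero,
          ← exp_one_pow]
        ring

theorem sum_pow_sum_boolSign_mul_le (a : ι → ℝ) (m : ℕ) :
    (∑ σ : ι → Bool, (∑ i, boolSign (σ i) * a i) ^ (2 * m)) * (2 * m) ^ m
      ≤ 2 ^ (Fintype.card ι + 1) * (2 * m)! * (exp 1 * ∑ i, a i ^ 2) ^ m := by
  rcases (sum_nonneg fun i _ => sq_nonneg (a i)).eq_or_lt with hv | hv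
  · have ha : a = 0 := funext fun i =>
      pow_eq_zero_iff two_ne_zero |>.mp <|
        (sum_eq_zero_iff_of_nonneg fun i _ => sq_nonneg (a i)).mp hv.symm i (mem_univ i)
    rcases m with _ | m
    · simp [pow_succ]
    · simp [ha]
  · refine (sum_pow_mul_le_of_sum_exp_le (M := 2 ^ Fintype.card ι) _ hv (fun t => ?_) m).trans_eq (by ring)
    calc ∑ σ : ι → Bool, exp (t * ∑ i, boolSign (σ i) * a i)
        = ∑ σ : ι → Bool, exp (∑ i, boolSign (σ i) * (t * a i)) := by
          simp_rw [mul_sum, mul_left_comm]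
      _ ≤ 2 ^ Fintype.card ι * exp ((∑ i, (t * a i) ^ 2) / 2) := sum_exp_sum_boolSign_mul_le _
      _ = _ := by simp_rw [mul_pow, ← mul_sum]

end Rademacher

theorem Nat.descFactorial_mul_pow_le {k n : ℕ} (hkn : k ≤ n) (r : ℕ) :
    k.descFactorial r * n ^ r ≤ n.descFactorial r * k ^ r := by
  induction r with
  | zero => simp
  | succ r ih =>
    have hstep : (k - r) * n ≤ (n - r) * k := by
      rw [Nat.sub_mul, Nat.sub_mul, mul_comm k n]
      exact Nat.sub_le_sub_left (Nat.mul_le_mul_left r hkn) _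
    calc k.descFactorial (r + 1) * n ^ (r + 1)
        = ((k - r) * n) * (k.descFactorial r * n ^ r) := by
          rw [Nat.descFactorial_succ, pow_succ]; ring
      _ ≤ ((n - r) * k) * (n.descFactorial r * k ^ r) := Nat.mul_le_mul hstep ih
      _ = n.descFactorial (r + 1) * k ^ (r + 1) := by
          rw [Nat.descFactorial_succ, pow_succ]; ring

theorem Nat.choose_sub_mul_pow_le {n k r : ℕ} (hkn : k ≤ n) (hrk : r ≤ k) :
    (n - r).choose (k - r) * n ^ r ≤ n.choose k * k ^ r := by
  refine Nat.le_of_mul_le_mul_right ?_ (Nat.descFactorial_pos.mpr (hrk.trans hkn))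
  calc (n - r).choose (k - r) * n ^ r * n.descFactorial r
      = n.choose k * k.descFactorial r * n ^ r := by
        rw [Nat.descFactorial_eq_factorial_mul_choose, Nat.descFactorial_eq_factorial_mul_choose]
        calc _ = r ! * n ^ r * (n.choose r * (n - r).choose (k - r)) := by ring
          _ = r ! * n ^ r * (n.choose k * k.choose r) := by rw [Nat.choose_mul hrk]
          _ = _ := by ring
    _ ≤ n.choose k * n.descFactorial r * k ^ r := by
        rw [mul_assoc, mul_assoc]
        exact Nat.mul_le_mul_left _ (Nat.descFactorial_mul_pow_le hkn r)
    _ = n.choose k * k ^ r * n.descFactorial r := by ring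

section Intersections

variable {α : Type*} [Fintype α] [DecidableEq α]

theorem card_filter_superset_mul_pow_le (R : Finset α) {k : ℕ} (hk : k ≤ Fintype.card α) :
    #{T ∈ powersetCard k univ | R ⊆ T} * Fintype.card α ^ #R
      ≤ (Fintype.card α).choose k * k ^ #R := by
  by_cases hR : #R ≤ k
  · rw [card_filter_powersetCard_subset R univ k (subset_univ R) hR, card_univ]
    exact Nat.choose_sub_mul_pow_le hk hR
  · rw [filter_false_of_mem fun T hT hRT =>
      hR ((card_le_card hRT).trans (mem_powersetCard.mp hT).2.le)]
    simp

theorem sum_pow_card_insert_le {q : ℝ} (hq : 0 ≤ q) (s : Finset α) :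
    ∑ v, q ^ #(insert v s) ≤ (#s + Fintype.card α * q) * q ^ #s := by
  calc ∑ v, q ^ #(insert v s)
      = ∑ v, (if v ∈ s then 1 else q) * q ^ #s := by
        refine sum_congr rfl fun v _ => ?_
        rw [card_insert_eq_ite]
        split_ifs <;> ring
    _ ≤ ∑ v, ((if v ∈ s then 1 else 0) + q) * q ^ #s := by
        gcongr with v
        split_ifs <;> linarith
    _ = (#s + Fintype.card α * q) * q ^ #s := by
        rw [← sum_mul, sum_add_distrib, sum_boole, filter_mem_eq_inter, univ_inter]
        simp

theorem sum_pow_card_image_le {q : ℝ} (hq : 0 ≤ q) (ℓ : ℕ) :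
    ∑ f : Fin ℓ → α, q ^ #(univ.image f) ≤ (ℓ + Fintype.card α * q) ^ ℓ := by
  induction ℓ with
  | zero => simp
  | succ ℓ ih =>
    have himage (v : α) (f : Fin ℓ → α) :
        univ.image (Fin.cons v f : Fin (ℓ + 1) → α) = insert v (univ.image f) := by
      ext x; simp [Fin.exists_fin_succ, eq_comm]
    calc ∑ f : Fin (ℓ + 1) → α, q ^ #(univ.image f)
        = ∑ f : Fin ℓ → α, ∑ v, q ^ #(insert v (univ.image f)) := by
          rw [← (Fin.consEquiv fun _ => α).sum_comp, Fintype.sum_prod_type, sum_comm]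
          simp [Fin.consEquiv, himage]
      _ ≤ ∑ f : Fin ℓ → α, (ℓ + Fintype.card α * q) * q ^ #(univ.image f) := by
          gcongr with f
          refine (sum_pow_card_insert_le hq _).trans ?_
          gcongr
          exact_mod_cast card_image_le.trans (by simp)
      _ ≤ (ℓ + Fintype.card α * q) * (ℓ + Fintype.card α * q) ^ ℓ := by
          rw [← mul_sum]; gcongr
      _ ≤ ((ℓ + 1 : ℕ) + Fintype.card α * q) ^ (ℓ + 1) := by
          rw [← pow_succ']; gcongr; linarith

theorem sum_card_inter_pow_eq (P : Finset (Finset α)) (ℓ : ℕ) :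
    ∑ T₁ ∈ P, ∑ T₂ ∈ P, #(T₁ ∩ T₂) ^ ℓ
      = ∑ f : Fin ℓ → α, #{T ∈ P | univ.image f ⊆ T} ^ 2 := by
  have hpow (S : Finset α) : #S ^ ℓ = #{f : Fin ℓ → α | univ.image f ⊆ S} := by
    have hpi : ({f | univ.image f ⊆ S} : Finset (Fin ℓ → α)) = Fintype.piFinset fun _ => S := by
      ext f; simp [Fintype.mem_piFinset, image_subset_iff]
    rw [hpi, Fintype.card_piFinset, prod_const, card_univ, Fintype.card_fin]
  simp_rw [hpow, card_filter, sq, sum_mul_sum, ite_zero_mul_ite_zero, mul_one, subset_inter_iff]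
  exact (sum_congr rfl fun T₁ _ => sum_comm).trans sum_comm

theorem sum_card_inter_pow_le [Nonempty α] {k : ℕ} (hk : k ≤ Fintype.card α) (ℓ : ℕ) :
    ∑ T₁ ∈ powersetCard k univ, ∑ T₂ ∈ powersetCard k (univ : Finset α), (#(T₁ ∩ T₂) : ℝ) ^ ℓ
      ≤ (Fintype.card α).choose k ^ 2 * (ℓ + k ^ 2 / Fintype.card α) ^ ℓ := by
  set n := Fintype.card α
  have hn : (0 : ℝ) < n := by exact_mod_cast Fintype.card_pos
  have hsuper (R : Finset α) :
      (#{T ∈ powersetCard k univ | R ⊆ T} : ℝ) ≤ n.choose k * (k / n) ^ #R := by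
    rw [div_pow, mul_div_assoc', le_div_iff₀ (by positivity)]
    exact_mod_cast card_filter_superset_mul_pow_le R hk
  calc ∑ T₁ ∈ powersetCard k univ, ∑ T₂ ∈ powersetCard k univ, (#(T₁ ∩ T₂) : ℝ) ^ ℓ
      = ∑ f : Fin ℓ → α, (#{T ∈ powersetCard k univ | univ.image f ⊆ T} : ℝ) ^ 2 := by
        exact_mod_cast sum_card_inter_pow_eq _ ℓ
    _ ≤ ∑ f : Fin ℓ → α, ((n.choose k : ℝ) * (k / n) ^ #(univ.image f)) ^ 2 := by
        gcongr with f; exact hsuper _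
    _ = (n.choose k : ℝ) ^ 2 * ∑ f : Fin ℓ → α, (((k : ℝ) / n) ^ 2) ^ #(univ.image f) := by
        rw [mul_sum]; simp_rw [mul_pow, ← pow_mul, mul_comm 2]
    _ ≤ n.choose k ^ 2 * (ℓ + n * (k / n) ^ 2) ^ ℓ := by
        gcongr; exact sum_pow_card_image_le (by positivity) ℓ
    _ = n.choose k ^ 2 * (ℓ + k ^ 2 / n) ^ ℓ := by
        congr 3; field_simp

end Intersections

section SparseSignVectors

variable {ι : Type*} [Fintype ι] [DecidableEq ι]

noncomputable def sparseSignVector (s : ℝ) (T : Finset ι) (σ : ι → Bool) (i : ι) : ℝ :=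
  if i ∈ T then boolSign (σ i) / s else 0

theorem sum_signs_pow_inner_sparseSignVector_le (s : ℝ) (T₁ T₂ : Finset ι) (m : ℕ) :
    (∑ σ₁ : ι → Bool, ∑ σ₂ : ι → Bool,
        (∑ i, sparseSignVector s T₁ σ₁ i * sparseSignVector s T₂ σ₂ i) ^ (2 * m)) * (2 * m) ^ m
      ≤ 2 ^ (2 * Fintype.card ι + 1) * (2 * m)! * (exp 1 * #(T₁ ∩ T₂) / s ^ 4) ^ m := by
  set a : (ι → Bool) → ι → ℝ := fun σ₂ i => (if i ∈ T₁ then s⁻¹ else 0) * sparseSignVector s T₂ σ₂ i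
  have hinner (σ₁ σ₂ : ι → Bool) :
      ∑ i, sparseSignVector s T₁ σ₁ i * sparseSignVector s T₂ σ₂ i
        = ∑ i, boolSign (σ₁ i) * a σ₂ i := by
    refine sum_congr rfl fun i _ => ?_
    simp only [a, sparseSignVector]
    split_ifs <;> ring
  have hvar (σ₂ : ι → Bool) : ∑ i, a σ₂ i ^ 2 = #(T₁ ∩ T₂) / s ^ 4 := by
    have hsq (i : ι) : a σ₂ i ^ 2 = if i ∈ T₁ ∩ T₂ then (s ^ 4)⁻¹ else 0 := by
      simp only [a, sparseSignVector, mem_inter]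
      split_ifs <;> simp_all [mul_pow, div_pow, boolSign_sq]; ring
    simp_rw [hsq]
    rw [sum_ite_mem, univ_inter, sum_const, nsmul_eq_mul, div_eq_mul_inv]
  calc (∑ σ₁ : ι → Bool, ∑ σ₂ : ι → Bool,
        (∑ i, sparseSignVector s T₁ σ₁ i * sparseSignVector s T₂ σ₂ i) ^ (2 * m)) * (2 * m) ^ m
      = ∑ σ₂ : ι → Bool, (∑ σ₁ : ι → Bool, (∑ i, boolSign (σ₁ i) * a σ₂ i) ^ (2 * m))
          * (2 * m) ^ m := by
        simp_rw [hinner]; rw [sum_comm, sum_mul]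
    _ ≤ ∑ _σ₂ : ι → Bool,
          2 ^ (Fintype.card ι + 1) * (2 * m)! * (exp 1 * #(T₁ ∩ T₂) / s ^ 4) ^ m := by
        refine sum_le_sum fun σ₂ _ => ?_
        rw [mul_div_assoc, ← hvar σ₂]
        exact sum_pow_sum_boolSign_mul_le _ m
    _ = 2 ^ (2 * Fintype.card ι + 1) * (2 * m)! * (exp 1 * #(T₁ ∩ T₂) / s ^ 4) ^ m := by
        rw [sum_const, card_univ, Fintype.card_fun, Fintype.card_bool, nsmul_eq_mul]
        push_cast; ring

theorem sum_supports_signs_pow_inner_sparseSignVector_le [Nonempty ι] (s : ℝ) {k : ℕ}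
    (hk : k ≤ Fintype.card ι) (m : ℕ) :
    (∑ T₁ ∈ powersetCard k univ, ∑ T₂ ∈ powersetCard k univ, ∑ σ₁ : ι → Bool, ∑ σ₂ : ι → Bool,
        (∑ i, sparseSignVector s T₁ σ₁ i * sparseSignVector s T₂ σ₂ i) ^ (2 * m)) * (2 * m) ^ m
      ≤ ((Fintype.card ι).choose k * 2 ^ Fintype.card ι) ^ 2
          * (2 * (2 * m)! * (exp 1 / s ^ 4) ^ m * (m + k ^ 2 / Fintype.card ι) ^ m) := by
  calc _ ≤ ∑ T₁ ∈ powersetCard k univ, ∑ T₂ ∈ powersetCard k (univ : Finset ι),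
          2 ^ (2 * Fintype.card ι + 1) * (2 * m)! * (exp 1 * #(T₁ ∩ T₂) / s ^ 4) ^ m := by
        rw [sum_mul]
        refine sum_le_sum fun T₁ _ => ?_
        rw [sum_mul]
        exact sum_le_sum fun T₂ _ => sum_signs_pow_inner_sparseSignVector_le s T₁ T₂ m
    _ = 2 ^ (2 * Fintype.card ι + 1) * (2 * m)! * (exp 1 / s ^ 4) ^ m
          * ∑ T₁ ∈ powersetCard k univ, ∑ T₂ ∈ powersetCard k (univ : Finset ι),
              (#(T₁ ∩ T₂) : ℝ) ^ m := by
        simp_rw [mul_sum]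
        refine sum_congr rfl fun _ _ => sum_congr rfl fun _ _ => ?_
        rw [mul_div_right_comm, mul_pow]; ring
    _ ≤ 2 ^ (2 * Fintype.card ι + 1) * (2 * m)! * (exp 1 / s ^ 4) ^ m
          * ((Fintype.card ι).choose k ^ 2 * (m + k ^ 2 / Fintype.card ι) ^ m) := by
        gcongr; exact sum_card_inter_pow_le hk m
    _ = _ := by ring

end SparseSignVectors

theorem Nat.two_mul_factorial_two_mul_le {m : ℕ} (hm : 0 < m) :
    2 * (2 * m)! ≤ 2 ^ m * (2 * m) ^ (2 * m) :=
  Nat.mul_le_mul (Nat.le_self_pow hm.ne' 2) (Nat.factorial_le_pow _)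

theorem exp_one_div_sqrt_add_one_pow_four_mul_le {k d ℓ : ℝ} (hk : 0 < k) (hd : 0 < d)
    (hℓ : 0 ≤ ℓ) :
    exp 1 / √(k + 1) ^ 4 * (ℓ + k ^ 2 / d) ≤ 3 * (ℓ / k ^ 2 + 1 / d) := by
  rw [show 4 = 2 * 2 from rfl, pow_mul, sq_sqrt (by positivity),
    show exp 1 / (k + 1) ^ 2 * (ℓ + k ^ 2 / d) = exp 1 * (ℓ / (k + 1) ^ 2 + k ^ 2 / (k + 1) ^ 2 / d)
      by ring]
  have hk2 : k ^ 2 / (k + 1) ^ 2 ≤ 1 := by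
    rw [div_le_one (by positivity)]; gcongr; linarith
  gcongr
  · exact (exp_one_lt_d9.trans (by norm_num)).le
  · linarith

/-- Moment bound for the inner product of two independent uniformly random
k-sparse sign vectors with entries of magnitude 1/√(k+1):
E[⟨x⁽¹⁾, x⁽²⁾⟩^{2ℓ}] ≤ (Cℓ)^ℓ (1/d + ℓ/k²)^ℓ for an absolute constant C > 0.
The distribution is realized by a uniform support T of size k together with
i.i.d. uniform signs σ. -/
theorem stmt11 :
    ∃ C : ℝ, 0 < C ∧
      ∀ (d k : ℕ), 0 < k → k ≤ d → ∀ ℓ : ℕ, 0 < ℓ →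
        letI vec : Finset (Fin d) → (Fin d → Bool) → Fin d → ℝ := fun T σ i =>
          if i ∈ T then (if σ i then 1 else -1) / Real.sqrt (k + 1) else 0
        (∑ T₁ ∈ (univ : Finset (Fin d)).powersetCard k,
          ∑ T₂ ∈ (univ : Finset (Fin d)).powersetCard k,
            ∑ σ₁ : Fin d → Bool, ∑ σ₂ : Fin d → Bool,
              (∑ i, vec T₁ σ₁ i * vec T₂ σ₂ i) ^ (2 * ℓ))
          / ((d.choose k : ℝ) * 2 ^ d) ^ 2
        ≤ (C * ℓ) ^ ℓ * (1 / d + (ℓ : ℝ) / k ^ 2) ^ ℓ := by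
  refine ⟨12, by norm_num, fun d k hk hkd ℓ hℓ => ?_⟩
  have : Nonempty (Fin d) := ⟨⟨0, hk.trans_le hkd⟩⟩
  have hmoment := sum_supports_signs_pow_inner_sparseSignVector_le (√(k + 1))
    (by simpa using hkd : k ≤ Fintype.card (Fin d)) ℓ
  simp only [Fintype.card_fin] at hmoment
  have hfactorial : (2 * (2 * ℓ)! : ℝ) ≤ 2 ^ ℓ * (2 * ℓ) ^ (2 * ℓ) := by
    exact_mod_cast Nat.two_mul_factorial_two_mul_le hℓ
  have hratio := exp_one_div_sqrt_add_one_pow_four_mul_le (ℓ := ℓ)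
    (by exact_mod_cast hk : (0 : ℝ) < k) (by exact_mod_cast hk.trans_le hkd : (0 : ℝ) < d)
    (by positivity)
  have hchoose : (0 : ℝ) < d.choose k := by exact_mod_cast Nat.choose_pos hkd
  rw [div_le_iff₀ (by positivity)]
  refine le_of_mul_le_mul_right ?_ (by positivity : (0 : ℝ) < (2 * ℓ) ^ ℓ)
  -- `vec` unfolds to `sparseSignVector √(k + 1)`, so `hmoment` bounds the left-hand side.
  calc _ ≤ _ := hmoment
    _ = ((d.choose k : ℝ) * 2 ^ d) ^ 2
          * (2 * (2 * ℓ)! * (exp 1 / √(k + 1) ^ 4 * (ℓ + k ^ 2 / d)) ^ ℓ) := by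
        rw [mul_pow (exp 1 / _)]; ring
    _ ≤ ((d.choose k : ℝ) * 2 ^ d) ^ 2
          * (2 ^ ℓ * (2 * ℓ) ^ (2 * ℓ) * (3 * (ℓ / k ^ 2 + 1 / d)) ^ ℓ) := by
        gcongr
    _ = _ := by
        rw [show (12 : ℝ) = 2 * 2 * 3 by norm_num, two_mul ℓ, pow_add]
        simp only [mul_pow]
        ring
end

section
/- Let D, n, k be positive integers with D even, let 0 < δ ≤ 0.1, and suppose each term of the sum satisfies the moment bound E[⟨x⁽¹⁾, x⁽²⁾⟩^{2ℓ}] ≤ (Cℓ)^ℓ (1/d + ℓ/k²)^ℓ + (4/(k+1)²)^ℓ for an absolute constant C. If max(n, D)·D = o(k²), max(n, D) = o(d), and D = o(k), then Σ_{ℓ=1}^{D/2} (16·max(n,D)/ℓ)^ℓ · E[⟨x⁽¹⁾, x⁽²⁾⟩^{2ℓ}] = o(1) as k → ∞. -/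
open Filter Asymptotics

lemma geom_half_bound (N : ℕ) : ∑ ℓ ∈ Finset.Icc 1 N, (1/2:ℝ)^(ℓ-1) ≤ 2 := by
  have h : ∑ ℓ ∈ Finset.Icc 1 N, (1/2:ℝ)^(ℓ-1) = ∑ j ∈ Finset.range N, (1/2:ℝ)^j := by
    rw [← Finset.Ico_add_one_right_eq_Icc, Finset.sum_Ico_eq_sum_range]
    simp
  rw [h, geom_sum_eq (by norm_num : (1/2:ℝ) ≠ 1)]
  have h2 : ((1/2:ℝ)^N - 1)/(1/2 - 1) = 2 - 2*(1/2)^N := by ring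
  have h3 : (0:ℝ) ≤ (1/2:ℝ)^N := by positivity
  linarith [h2]

set_option maxHeartbeats 1000000 in
/-- Summation step of the low-degree likelihood ratio bound: if the moments
E k ℓ := E[⟨x⁽¹⁾, x⁽²⁾⟩^{2ℓ}] satisfy the bound
E k ℓ ≤ (Cℓ)^ℓ (1/d + ℓ/k²)^ℓ + (4/(k+1)²)^ℓ, and
max(n,D)·D = o(k²), max(n,D) = o(d), D = o(k) (as k → ∞), then
Σ_{ℓ=1}^{D/2} (16·max(n,D)/ℓ)^ℓ · E k ℓ → 0. -/
theorem stmt13 (n d D : ℕ → ℕ) (E : ℕ → ℕ → ℝ) (δ : ℝ) (hδ0 : 0 < δ) (hδ1 : δ ≤ 0.1)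
    (hDeven : ∀ k, Even (D k))
    (hE0 : ∀ k ℓ, 0 ≤ E k ℓ)
    (hmom : ∃ C : ℝ, 0 < C ∧ ∀ k ℓ : ℕ, 1 ≤ ℓ →
      E k ℓ ≤ (C * ℓ) ^ ℓ * (1 / (d k : ℝ) + (ℓ : ℝ) / (k : ℝ) ^ 2) ^ ℓ
        + (4 / ((k : ℝ) + 1) ^ 2) ^ ℓ)
    (h1 : (fun k => (max (n k) (D k) * D k : ℝ)) =o[atTop] fun k : ℕ => (k : ℝ) ^ 2)
    (h2 : (fun k => (max (n k) (D k) : ℝ)) =o[atTop] fun k : ℕ => (d k : ℝ))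
    (h3 : (fun k => (D k : ℝ)) =o[atTop] fun k : ℕ => (k : ℝ)) :
    Tendsto
      (fun k => ∑ ℓ ∈ Finset.Icc 1 (D k / 2),
        (16 * max (n k) (D k) / (ℓ : ℝ)) ^ ℓ * E k ℓ)
      atTop (nhds 0) := by
  obtain ⟨C, hC, hmomC⟩ := hmom
  set M : ℕ → ℝ := fun k => (max (n k) (D k) : ℝ) with hMdef
  have hM0 : ∀ k, 0 ≤ M k := by intro k; simp only [hMdef]; positivity
  have hD0 : ∀ k, (0:ℝ) ≤ (D k : ℝ) := fun k => Nat.cast_nonneg _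
  -- quotient limits
  have hq1 : Tendsto (fun k => M k / (d k : ℝ)) atTop (nhds 0) :=
    h2.tendsto_div_nhds_zero
  have hq2 : Tendsto (fun k => M k * (D k : ℝ) / (k : ℝ) ^ 2) atTop (nhds 0) := by
    have := h1.tendsto_div_nhds_zero
    simpa [Nat.cast_mul, hMdef] using this
  have hq3 : Tendsto (fun k => M k * (D k : ℝ) / ((k : ℝ) + 1) ^ 2) atTop (nhds 0) := by
    apply tendsto_of_tendsto_of_tendsto_of_le_of_le' tendsto_const_nhds hq2
    · filter_upwards with k
      positivity
    · filter_upwards [eventually_ge_atTop 1] with k hk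
      apply div_le_div_of_nonneg_left (by positivity) (by positivity)
      have : (1:ℝ) ≤ (k:ℝ) := by exact_mod_cast hk
      nlinarith
  set r : ℕ → ℝ := fun k => 16*C*(M k / (d k : ℝ)) + 16*C*(M k * (D k : ℝ) / (k:ℝ)^2)
    with hrdef
  set s : ℕ → ℝ := fun k => 32 * (M k * (D k : ℝ) / ((k:ℝ)+1)^2) with hsdef
  have hr0 : ∀ k, 0 ≤ r k := by
    intro k; simp only [hrdef]
    have := hC.le
    positivity
  have hs0 : ∀ k, 0 ≤ s k := by
    intro k; simp only [hsdef]; positivity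
  have hrT : Tendsto r atTop (nhds 0) := by
    have := (hq1.const_mul (16*C)).add (hq2.const_mul (16*C))
    simpa [hrdef, mul_assoc] using this
  have hsT : Tendsto s atTop (nhds 0) := by
    have := hq3.const_mul 32
    simpa [hsdef] using this
  have hgT : Tendsto (fun k => 2 * (r k + s k)) atTop (nhds 0) := by
    have := (hrT.add hsT).const_mul 2
    simpa using this
  apply tendsto_of_tendsto_of_tendsto_of_le_of_le' tendsto_const_nhds hgT
  · filter_upwards with k
    apply Finset.sum_nonneg
    intro ℓ hℓ
    exact mul_nonneg (pow_nonneg (by positivity) ℓ) (hE0 k ℓ)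
  · have hrev : ∀ᶠ k in atTop, r k ≤ 1/2 :=
      hrT.eventually (eventually_le_nhds (by norm_num))
    have hsev : ∀ᶠ k in atTop, s k ≤ 1/2 :=
      hsT.eventually (eventually_le_nhds (by norm_num))
    filter_upwards [hrev, hsev] with k hrk hsk
    calc ∑ ℓ ∈ Finset.Icc 1 (D k / 2), (16 * max (n k) (D k) / (ℓ : ℝ)) ^ ℓ * E k ℓ
        ≤ ∑ ℓ ∈ Finset.Icc 1 (D k / 2), (r k + s k) * (1/2)^(ℓ-1) := by
          apply Finset.sum_le_sum
          intro ℓ hℓ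
          rw [Finset.mem_Icc] at hℓ
          obtain ⟨hℓ1, hℓ2⟩ := hℓ
          have hD2 : (2:ℕ) ≤ D k := by
            have : 1 ≤ D k / 2 := le_trans hℓ1 hℓ2
            omega
          have hℓD : (ℓ:ℝ) ≤ (D k : ℝ) := by
            exact_mod_cast le_trans hℓ2 (Nat.div_le_self _ _)
          have hℓpos : (0:ℝ) < (ℓ:ℝ) := by exact_mod_cast hℓ1
          have hℓne : (ℓ:ℝ) ≠ 0 := ne_of_gt hℓpos
          have hD2' : (2:ℝ) ≤ (D k : ℝ) := by exact_mod_cast hD2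
          set X : ℝ := 1 / (d k : ℝ) + (ℓ : ℝ) / (k : ℝ) ^ 2 with hXdef
          have hX0 : 0 ≤ X := by simp only [hXdef]; positivity
          have hA0 : (0:ℝ) ≤ 16 * M k / (ℓ:ℝ) := by
            have := hM0 k
            positivity
          have step1 : (16 * M k / (ℓ : ℝ)) ^ ℓ * E k ℓ
              ≤ (16 * M k / (ℓ:ℝ)) ^ ℓ * ((C * ℓ) ^ ℓ * X ^ ℓ + (4 / ((k : ℝ) + 1) ^ 2) ^ ℓ) :=
            mul_le_mul_of_nonneg_left (hmomC k ℓ hℓ1) (pow_nonneg hA0 ℓ)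
          have step2 : (16 * M k / (ℓ:ℝ)) ^ ℓ * ((C * ℓ) ^ ℓ * X ^ ℓ + (4 / ((k : ℝ) + 1) ^ 2) ^ ℓ)
              = (16 * M k / (ℓ:ℝ) * (C * ℓ) * X) ^ ℓ
                + (16 * M k / (ℓ:ℝ) * (4 / ((k : ℝ) + 1) ^ 2)) ^ ℓ := by
            rw [mul_add, ← mul_pow, ← mul_pow, ← mul_pow]
            ring
          have hcancel : 16 * M k / (ℓ:ℝ) * (C * ℓ) = 16 * C * M k := by
            field_simp
          have hB1 : 16 * M k / (ℓ:ℝ) * (C * ℓ) * X ≤ r k := by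
            rw [hcancel]
            have e1 : 16 * C * M k * X
                = 16*C*(M k / (d k : ℝ)) + 16*C*((M k / (k:ℝ)^2) * (ℓ:ℝ)) := by
              simp only [hXdef]; ring
            have e2 : r k = 16*C*(M k / (d k : ℝ)) + 16*C*((M k / (k:ℝ)^2) * (D k:ℝ)) := by
              simp only [hrdef]; ring
            rw [e1, e2]
            have : (M k / (k:ℝ)^2) * (ℓ:ℝ) ≤ (M k / (k:ℝ)^2) * (D k:ℝ) :=
              mul_le_mul_of_nonneg_left hℓD (by positivity)
            have h16C : (0:ℝ) ≤ 16*C := by positivity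
            nlinarith [mul_le_mul_of_nonneg_left this h16C]
          have hB1nn : 0 ≤ 16 * M k / (ℓ:ℝ) * (C * ℓ) * X := by
            rw [hcancel]
            have := hC.le
            positivity
          have hB2 : 16 * M k / (ℓ:ℝ) * (4 / ((k : ℝ) + 1) ^ 2) ≤ s k := by
            have hkp : (0:ℝ) < ((k:ℝ)+1)^2 := by positivity
            have h1' : 16 * M k / (ℓ:ℝ) ≤ 16 * M k := by
              apply div_le_self (by positivity)
              exact_mod_cast hℓ1
            have h2' : 16 * M k / (ℓ:ℝ) * (4 / ((k : ℝ) + 1) ^ 2)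
                ≤ 16 * M k * (4 / ((k : ℝ) + 1) ^ 2) :=
              mul_le_mul_of_nonneg_right h1' (by positivity)
            have h3' : 16 * M k * (4 / ((k : ℝ) + 1) ^ 2) ≤ s k := by
              simp only [hsdef]
              rw [show 16 * M k * (4 / ((k : ℝ) + 1) ^ 2) = (64 * M k) / ((k:ℝ)+1)^2 from by ring,
                  show 32 * (M k * (D k:ℝ) / ((k:ℝ)+1)^2) = (32 * M k * (D k:ℝ)) / ((k:ℝ)+1)^2 from by ring]
              exact (div_le_div_iff_of_pos_right hkp).mpr (by nlinarith [hM0 k])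
            linarith
          have hB2nn : 0 ≤ 16 * M k / (ℓ:ℝ) * (4 / ((k : ℝ) + 1) ^ 2) := by positivity
          have powr : (16 * M k / (ℓ:ℝ) * (C * ℓ) * X) ^ ℓ ≤ (1/2:ℝ)^(ℓ-1) * r k := by
            calc (16 * M k / (ℓ:ℝ) * (C * ℓ) * X) ^ ℓ ≤ (r k) ^ ℓ :=
                  pow_le_pow_left₀ hB1nn hB1 ℓ
              _ = (r k)^(ℓ-1) * r k := by
                  rw [← pow_succ]; congr 1; omega
              _ ≤ (1/2:ℝ)^(ℓ-1) * r k :=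
                  mul_le_mul_of_nonneg_right (pow_le_pow_left₀ (hr0 k) hrk _) (hr0 k)
          have pows : (16 * M k / (ℓ:ℝ) * (4 / ((k : ℝ) + 1) ^ 2)) ^ ℓ
              ≤ (1/2:ℝ)^(ℓ-1) * s k := by
            calc (16 * M k / (ℓ:ℝ) * (4 / ((k : ℝ) + 1) ^ 2)) ^ ℓ ≤ (s k) ^ ℓ :=
                  pow_le_pow_left₀ hB2nn hB2 ℓ
              _ = (s k)^(ℓ-1) * s k := by
                  rw [← pow_succ]; congr 1; omega
              _ ≤ (1/2:ℝ)^(ℓ-1) * s k :=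
                  mul_le_mul_of_nonneg_right (pow_le_pow_left₀ (hs0 k) hsk _) (hs0 k)
          rw [show ((max (n k) (D k) : ℕ) : ℝ) = M k from by simp [hMdef, Nat.cast_max]]
          calc (16 * M k / (ℓ : ℝ)) ^ ℓ * E k ℓ
              ≤ (16 * M k / (ℓ:ℝ) * (C * ℓ) * X) ^ ℓ
                + (16 * M k / (ℓ:ℝ) * (4 / ((k : ℝ) + 1) ^ 2)) ^ ℓ := by
                rw [← step2]; exact step1
            _ ≤ (1/2:ℝ)^(ℓ-1) * r k + (1/2:ℝ)^(ℓ-1) * s k := add_le_add powr pows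
            _ = (r k + s k) * (1/2)^(ℓ-1) := by ring
      _ = (r k + s k) * ∑ ℓ ∈ Finset.Icc 1 (D k / 2), (1/2:ℝ)^(ℓ-1) := by
          rw [Finset.mul_sum]
      _ ≤ (r k + s k) * 2 :=
          mul_le_mul_of_nonneg_left (geom_half_bound _) (add_nonneg (hr0 k) (hs0 k))
      _ = 2 * (r k + s k) := by ring
end
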